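/- arXiv:2505.20523 — 5 statements merged into one kernel-verified Lean document; each statement's English description precedes it below -/
import Mathlib

section
/- Fix s ≥ 0 and a : 𝒳 → ℝ with V_{s,a} > 0, and define φ_{s,a}(x,y) = ( i_{s,a}(x,y) − Σ_{y'} Ŵ(y'|x) i_{s,a}(x,y') ) / √V_{s,a}. Then for every r ≥ 0 and every conditional pmf P in the chi-squared ball B̃(Ŵ,r), one has Σ_{x,y} Q(x) P(y|x) i_{s,a}(x,y) ≥ I^ML_{s,a} − √(2 r V_{s,a}). Moreover, if in addition r ≤ 1 / ( 2 · max_{(x,y) : φ_{s,a}(x,y) > 0} φ_{s,a}(x,y)² ), then equality is attained by the conditional pmf W̃*_{s,a}(y|x) = Ŵ(y|x) ( 1 − √(2r) · φ_{s,a}(x,y) ), so that the infimum of Σ_{x,y} Q(x) P(y|x) i_{s,a}(x,y) over P ∈ B̃(Ŵ,r) equals I^ML_{s,a} − √(2 r V_{s,a}). -/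
open Real Filter

variable {𝓧 𝓨 : Type*} [Fintype 𝓧] [Fintype 𝓨]

/-- Mismatched information density `i_{s,a}(x,y)`. -/
noncomputable def iDen (Q : 𝓧 → ℝ) (Wh : 𝓧 → 𝓨 → ℝ) (s : ℝ) (a : 𝓧 → ℝ) (x : 𝓧) (y : 𝓨) : ℝ :=
  Real.log ((Wh x y ^ s * Real.exp (a x)) / ∑ x' : 𝓧, Q x' * Wh x' y ^ s * Real.exp (a x'))

/-- `I^ML_{s,a}`. -/
noncomputable def IML (Q : 𝓧 → ℝ) (Wh : 𝓧 → 𝓨 → ℝ) (s : ℝ) (a : 𝓧 → ℝ) : ℝ :=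
  ∑ x : 𝓧, ∑ y : 𝓨, Q x * Wh x y * iDen Q Wh s a x y

/-- `V_{s,a}`. -/
noncomputable def Vsa (Q : 𝓧 → ℝ) (Wh : 𝓧 → 𝓨 → ℝ) (s : ℝ) (a : 𝓧 → ℝ) : ℝ :=
  ∑ x : 𝓧, Q x * ((∑ y : 𝓨, Wh x y * (iDen Q Wh s a x y) ^ 2)
    - (∑ y : 𝓨, Wh x y * iDen Q Wh s a x y) ^ 2)

/-- Conditional pmf on `𝓨` given `𝓧`. -/
def IsCondPMF (P : 𝓧 → 𝓨 → ℝ) : Prop :=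
  (∀ x y, 0 ≤ P x y) ∧ ∀ x, ∑ y : 𝓨, P x y = 1

/-- Chi-squared ball `B̃(Ŵ, r)`. -/
def chiBall (Q : 𝓧 → ℝ) (Wh : 𝓧 → 𝓨 → ℝ) (r : ℝ) : Set (𝓧 → 𝓨 → ℝ) :=
  {P | IsCondPMF P ∧
    (1 / 2) * ∑ x : 𝓧, ∑ y : 𝓨, Q x * (P x y - Wh x y) ^ 2 / Wh x y ≤ r}

/-- `φ_{s,a}(x,y)`. -/
noncomputable def phiSA (Q : 𝓧 → ℝ) (Wh : 𝓧 → 𝓨 → ℝ) (s : ℝ) (a : 𝓧 → ℝ) (x : 𝓧) (y : 𝓨) : ℝ :=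
  (iDen Q Wh s a x y - ∑ y' : 𝓨, Wh x y' * iDen Q Wh s a x y') / Real.sqrt (Vsa Q Wh s a)

/-- Worst-case channel `W̃*_{s,a}` in the chi-squared ball of radius `r`. -/
noncomputable def Wstar (Q : 𝓧 → ℝ) (Wh : 𝓧 → 𝓨 → ℝ) (s : ℝ) (a : 𝓧 → ℝ) (r : ℝ) :
    𝓧 → 𝓨 → ℝ :=
  fun x y => Wh x y * (1 - Real.sqrt (2 * r) * phiSA Q Wh s a x y)

/-!
Write `c = i_{s,a} − E_Ŵ[i_{s,a} | x]` for the conditionally centred density, so that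
`V_{s,a} = E_{QŴ}[c²]`. Since `P(·|x)` and `Ŵ(·|x)` have the same mass, the gap
`Σ Q P i − I^ML` equals `Σ Q (P − Ŵ) c`, and Cauchy–Schwarz with weights `Q/Ŵ` and `QŴ` bounds its
square by `2r · V_{s,a}` on the ball. Equality in Cauchy–Schwarz forces `P − Ŵ` proportional to
`−Ŵ c`, which is the channel `W̃*`; the bound on `r` is exactly what keeps it nonnegative.
-/

section

variable {Q : 𝓧 → ℝ} {Wh P : 𝓧 → 𝓨 → ℝ}

def condCenter (Wh f : 𝓧 → 𝓨 → ℝ) (x : 𝓧) (y : 𝓨) : ℝ :=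
  f x y - ∑ y' : 𝓨, Wh x y' * f x y'

lemma sum_mul_sub_sum_mul {w : 𝓨 → ℝ} (hw : ∑ y : 𝓨, w y = 1) (f : 𝓨 → ℝ) :
    ∑ y : 𝓨, w y * (f y - ∑ y' : 𝓨, w y' * f y') = 0 := by
  simp only [mul_sub, Finset.sum_sub_distrib, ← Finset.sum_mul, hw, one_mul, sub_self]

lemma sum_mul_sub_sum_mul_sq {w : 𝓨 → ℝ} (hw : ∑ y : 𝓨, w y = 1) (f : 𝓨 → ℝ) :
    ∑ y : 𝓨, w y * (f y - ∑ y' : 𝓨, w y' * f y') ^ 2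
      = ∑ y : 𝓨, w y * f y ^ 2 - (∑ y : 𝓨, w y * f y) ^ 2 := by
  set m := ∑ y : 𝓨, w y * f y
  have expand : ∀ y, w y * (f y - m) ^ 2 = w y * f y ^ 2 - 2 * m * (w y * f y) + m ^ 2 * w y :=
    fun y => by ring
  rw [Finset.sum_congr rfl fun y _ => expand y, Finset.sum_add_distrib, Finset.sum_sub_distrib,
    ← Finset.mul_sum, ← Finset.mul_sum, hw]
  ring

lemma sum_sub_sum_eq_sum_mul_condCenter (hP : ∀ x, ∑ y : 𝓨, P x y = ∑ y : 𝓨, Wh x y)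
    (f : 𝓧 → 𝓨 → ℝ) :
    ∑ x : 𝓧, ∑ y : 𝓨, Q x * P x y * f x y - ∑ x : 𝓧, ∑ y : 𝓨, Q x * Wh x y * f x y
      = ∑ x : 𝓧, ∑ y : 𝓨, Q x * (P x y - Wh x y) * condCenter Wh f x y := by
  rw [← Finset.sum_sub_distrib]
  refine Finset.sum_congr rfl fun x _ => ?_
  set m := ∑ y : 𝓨, Wh x y * f x y
  have hPW : ∑ y : 𝓨, (P x y - Wh x y) = 0 := by rw [Finset.sum_sub_distrib, hP, sub_self]
  have expand : ∀ y, Q x * (P x y - Wh x y) * condCenter Wh f x y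
      = (Q x * P x y * f x y - Q x * Wh x y * f x y) - Q x * m * (P x y - Wh x y) := fun y => by
    simp only [condCenter, m]; ring
  rw [Finset.sum_congr rfl fun y _ => expand y, Finset.sum_sub_distrib, ← Finset.mul_sum, hPW,
    mul_zero, sub_zero, Finset.sum_sub_distrib]

lemma sq_sum_mul_le_chiSq_mul (hQ : ∀ x, 0 ≤ Q x) (hWpos : ∀ x y, 0 < Wh x y)
    (g : 𝓧 → 𝓨 → ℝ) :
    (∑ x : 𝓧, ∑ y : 𝓨, Q x * (P x y - Wh x y) * g x y) ^ 2
      ≤ (∑ x : 𝓧, ∑ y : 𝓨, Q x * (P x y - Wh x y) ^ 2 / Wh x y)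
        * ∑ x : 𝓧, ∑ y : 𝓨, Q x * Wh x y * g x y ^ 2 := by
  simp only [← Fintype.sum_prod_type']
  refine Finset.sum_sq_le_sum_mul_sum_of_sq_le_mul _ (fun p _ => ?_) (fun p _ => ?_)
    fun p _ => le_of_eq ?_
  · have := hQ p.1; have := hWpos p.1 p.2; positivity
  · have := hQ p.1; have := hWpos p.1 p.2; positivity
  · have := (hWpos p.1 p.2).ne'
    field_simp

lemma Vsa_eq_sum_condCenter_sq (hWsum : ∀ x, ∑ y : 𝓨, Wh x y = 1) (s : ℝ) (a : 𝓧 → ℝ) :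
    Vsa Q Wh s a = ∑ x : 𝓧, ∑ y : 𝓨, Q x * Wh x y * condCenter Wh (iDen Q Wh s a) x y ^ 2 := by
  simp only [Vsa, condCenter, ← sum_mul_sub_sum_mul_sq (hWsum _), Finset.mul_sum, mul_assoc]

lemma IML_sub_sqrt_le_of_mem_chiBall (hQ : ∀ x, 0 ≤ Q x) (hWpos : ∀ x y, 0 < Wh x y)
    (hWsum : ∀ x, ∑ y : 𝓨, Wh x y = 1) (s : ℝ) (a : 𝓧 → ℝ) {r : ℝ} (hP : P ∈ chiBall Q Wh r) :
    IML Q Wh s a - √(2 * r * Vsa Q Wh s a)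
      ≤ ∑ x : 𝓧, ∑ y : 𝓨, Q x * P x y * iDen Q Wh s a x y := by
  obtain ⟨⟨-, hPsum⟩, hchi⟩ := hP
  have hV : 0 ≤ Vsa Q Wh s a := by
    rw [Vsa_eq_sum_condCenter_sq hWsum]
    refine Finset.sum_nonneg fun x _ => Finset.sum_nonneg fun y _ => ?_
    have := hQ x; have := hWpos x y; positivity
  have hgap := sum_sub_sum_eq_sum_mul_condCenter (Q := Q) (fun x => (hPsum x).trans (hWsum x).symm)
    (iDen Q Wh s a)
  have hsq := sq_sum_mul_le_chiSq_mul (P := P) hQ hWpos (condCenter Wh (iDen Q Wh s a))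
  rw [← Vsa_eq_sum_condCenter_sq hWsum, ← hgap] at hsq
  have hbound := hsq.trans (mul_le_mul_of_nonneg_right (show _ ≤ 2 * r by linarith) hV)
  have := neg_le_of_abs_le (Real.abs_le_sqrt hbound)
  rw [IML]
  linarith

lemma sqrt_two_mul_mul_le_one {φ : 𝓧 → 𝓨 → ℝ} {r : ℝ} (hr : 0 ≤ r)
    (hrle : r ≤ 1 / (2 * sSup {v | ∃ x y, 0 < φ x y ∧ v = φ x y ^ 2})) (x : 𝓧) (y : 𝓨) :
    √(2 * r) * φ x y ≤ 1 := by
  rcases le_or_gt (φ x y) 0 with hnonpos | hpos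
  · nlinarith [Real.sqrt_nonneg (2 * r)]
  set S := {v | ∃ x y, 0 < φ x y ∧ v = φ x y ^ 2}
  have hS : S ⊆ Set.range fun p : 𝓧 × 𝓨 => φ p.1 p.2 ^ 2 := by
    rintro _ ⟨x', y', -, rfl⟩
    exact ⟨(x', y'), rfl⟩
  have hle : φ x y ^ 2 ≤ sSup S :=
    le_csSup ((Set.finite_range _).subset hS).bddAbove ⟨x, y, hpos, rfl⟩
  have hM : 0 < sSup S := (pow_pos hpos 2).trans_le hle
  have h2r : 2 * r * φ x y ^ 2 ≤ 1 := by
    rw [le_div_iff₀ (by positivity)] at hrle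
    nlinarith
  have hsq : (√(2 * r) * φ x y) ^ 2 ≤ 1 := by
    rwa [mul_pow, Real.sq_sqrt (by positivity)]
  nlinarith [Real.sqrt_nonneg (2 * r)]

variable {s : ℝ} {a : 𝓧 → ℝ}

lemma phiSA_eq_condCenter_div :
    phiSA Q Wh s a = fun x y => condCenter Wh (iDen Q Wh s a) x y / √(Vsa Q Wh s a) :=
  rfl

lemma sum_mul_phiSA (hWsum : ∀ x, ∑ y : 𝓨, Wh x y = 1) (x : 𝓧) :
    ∑ y : 𝓨, Wh x y * phiSA Q Wh s a x y = 0 := by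
  simp only [phiSA, mul_div_assoc', ← Finset.sum_div, sum_mul_sub_sum_mul (hWsum x), zero_div]

lemma sum_sum_mul_phiSA_sq (hWsum : ∀ x, ∑ y : 𝓨, Wh x y = 1) (hV : 0 < Vsa Q Wh s a) :
    ∑ x : 𝓧, ∑ y : 𝓨, Q x * Wh x y * phiSA Q Wh s a x y ^ 2 = 1 := by
  simp only [phiSA_eq_condCenter_div, div_pow, Real.sq_sqrt hV.le, mul_div_assoc',
    ← Finset.sum_div, ← Vsa_eq_sum_condCenter_sq hWsum, div_self hV.ne']

lemma sum_sum_mul_phiSA_mul_condCenter (hWsum : ∀ x, ∑ y : 𝓨, Wh x y = 1) :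
    ∑ x : 𝓧, ∑ y : 𝓨, Q x * Wh x y * phiSA Q Wh s a x y * condCenter Wh (iDen Q Wh s a) x y
      = √(Vsa Q Wh s a) := by
  have hφc : ∀ x y, Q x * Wh x y * phiSA Q Wh s a x y * condCenter Wh (iDen Q Wh s a) x y
      = Q x * Wh x y * condCenter Wh (iDen Q Wh s a) x y ^ 2 / √(Vsa Q Wh s a) := fun x y => by
    rw [phiSA_eq_condCenter_div]; ring
  simp only [hφc, ← Finset.sum_div, ← Vsa_eq_sum_condCenter_sq hWsum, Real.div_sqrt]

variable {r : ℝ}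

lemma Wstar_sub_self (x : 𝓧) (y : 𝓨) :
    Wstar Q Wh s a r x y - Wh x y = -(√(2 * r) * (Wh x y * phiSA Q Wh s a x y)) := by
  simp only [Wstar]; ring

lemma sum_Wstar (hWsum : ∀ x, ∑ y : 𝓨, Wh x y = 1) (x : 𝓧) :
    ∑ y : 𝓨, Wstar Q Wh s a r x y = 1 := by
  simp only [Wstar, mul_sub, mul_one, Finset.sum_sub_distrib, mul_left_comm (Wh x _),
    ← Finset.mul_sum, sum_mul_phiSA hWsum, hWsum, mul_zero, sub_zero]

lemma Wstar_mem_chiBall (hWpos : ∀ x y, 0 < Wh x y) (hWsum : ∀ x, ∑ y : 𝓨, Wh x y = 1)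
    (hV : 0 < Vsa Q Wh s a) (hr : 0 ≤ r) (hle : ∀ x y, √(2 * r) * phiSA Q Wh s a x y ≤ 1) :
    Wstar Q Wh s a r ∈ chiBall Q Wh r := by
  refine ⟨⟨fun x y => mul_nonneg (hWpos x y).le (sub_nonneg.2 (hle x y)), sum_Wstar hWsum⟩, ?_⟩
  have hterm : ∀ x y, Q x * (Wstar Q Wh s a r x y - Wh x y) ^ 2 / Wh x y
      = 2 * r * (Q x * Wh x y * phiSA Q Wh s a x y ^ 2) := fun x y => by
    have := (hWpos x y).ne'
    rw [Wstar_sub_self, neg_sq, mul_pow, mul_pow, Real.sq_sqrt (by linarith)]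
    field_simp
  simp only [hterm, ← Finset.mul_sum, sum_sum_mul_phiSA_sq hWsum hV]
  linarith

lemma sum_Wstar_mul_iDen (hWsum : ∀ x, ∑ y : 𝓨, Wh x y = 1) (hr : 0 ≤ r) :
    ∑ x : 𝓧, ∑ y : 𝓨, Q x * Wstar Q Wh s a r x y * iDen Q Wh s a x y
      = IML Q Wh s a - √(2 * r * Vsa Q Wh s a) := by
  have hgap := sum_sub_sum_eq_sum_mul_condCenter (Q := Q) (P := Wstar Q Wh s a r)
    (fun x => (sum_Wstar hWsum x).trans (hWsum x).symm) (iDen Q Wh s a)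
  have hterm : ∀ x y, Q x * (Wstar Q Wh s a r x y - Wh x y) * condCenter Wh (iDen Q Wh s a) x y
      = -√(2 * r) * (Q x * Wh x y * phiSA Q Wh s a x y * condCenter Wh (iDen Q Wh s a) x y) :=
    fun x y => by rw [Wstar_sub_self]; ring
  simp only [hterm, ← Finset.mul_sum, sum_sum_mul_phiSA_mul_condCenter hWsum] at hgap
  rw [IML, Real.sqrt_mul (by linarith)]
  linarith

end

theorem stmt2_general
    (Q : 𝓧 → ℝ) (hQpos : ∀ x, 0 < Q x)
    (Wh : 𝓧 → 𝓨 → ℝ) (hWpos : ∀ x y, 0 < Wh x y) (hWsum : ∀ x, ∑ y : 𝓨, Wh x y = 1)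
    (s : ℝ) (a : 𝓧 → ℝ) (hV : 0 < Vsa Q Wh s a) :
    (∀ r : ℝ, 0 ≤ r → ∀ P ∈ chiBall Q Wh r,
      IML Q Wh s a - Real.sqrt (2 * r * Vsa Q Wh s a)
        ≤ ∑ x : 𝓧, ∑ y : 𝓨, Q x * P x y * iDen Q Wh s a x y) ∧
    (∀ r : ℝ, 0 ≤ r →
      r ≤ 1 / (2 * sSup {v | ∃ x y, 0 < phiSA Q Wh s a x y ∧ v = (phiSA Q Wh s a x y) ^ 2}) →
      Wstar Q Wh s a r ∈ chiBall Q Wh r ∧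
      (∑ x : 𝓧, ∑ y : 𝓨, Q x * Wstar Q Wh s a r x y * iDen Q Wh s a x y)
        = IML Q Wh s a - Real.sqrt (2 * r * Vsa Q Wh s a) ∧
      sInf {v | ∃ P ∈ chiBall Q Wh r,
          v = ∑ x : 𝓧, ∑ y : 𝓨, Q x * P x y * iDen Q Wh s a x y}
        = IML Q Wh s a - Real.sqrt (2 * r * Vsa Q Wh s a)) := by
  have lower : ∀ r : ℝ, 0 ≤ r → ∀ P ∈ chiBall Q Wh r,
      IML Q Wh s a - √(2 * r * Vsa Q Wh s a)
        ≤ ∑ x : 𝓧, ∑ y : 𝓨, Q x * P x y * iDen Q Wh s a x y :=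
    fun r _ P hP => IML_sub_sqrt_le_of_mem_chiBall (fun x => (hQpos x).le) hWpos hWsum s a hP
  refine ⟨lower, fun r hr hrle => ?_⟩
  have hmem := Wstar_mem_chiBall hWpos hWsum hV hr (sqrt_two_mul_mul_le_one hr hrle)
  have hval := sum_Wstar_mul_iDen (Q := Q) (s := s) (a := a) hWsum hr
  refine ⟨hmem, hval, IsLeast.csInf_eq ⟨⟨_, hmem, hval.symm⟩, ?_⟩⟩
  rintro _ ⟨P, hP, rfl⟩
  exact lower r hr P hP

/-- Worst-case value of `Σ Q P i_{s,a}` over the chi-squared ball: lower bound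
valid for every `P` in the ball, attained by `W̃*_{s,a}` for small enough radius. -/
theorem stmt2 [Nonempty 𝓧] [Nonempty 𝓨]
    (Q : 𝓧 → ℝ) (hQpos : ∀ x, 0 < Q x) (hQle : ∀ x, Q x ≤ 1) (hQsum : ∑ x : 𝓧, Q x = 1)
    (Wh : 𝓧 → 𝓨 → ℝ) (hWpos : ∀ x y, 0 < Wh x y) (hWsum : ∀ x, ∑ y : 𝓨, Wh x y = 1)
    (s : ℝ) (hs : 0 ≤ s) (a : 𝓧 → ℝ) (hV : 0 < Vsa Q Wh s a) :
    (∀ r : ℝ, 0 ≤ r → ∀ P ∈ chiBall Q Wh r,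
      IML Q Wh s a - Real.sqrt (2 * r * Vsa Q Wh s a)
        ≤ ∑ x : 𝓧, ∑ y : 𝓨, Q x * P x y * iDen Q Wh s a x y) ∧
    (∀ r : ℝ, 0 ≤ r →
      r ≤ 1 / (2 * sSup {v | ∃ x y, 0 < phiSA Q Wh s a x y ∧ v = (phiSA Q Wh s a x y) ^ 2}) →
      Wstar Q Wh s a r ∈ chiBall Q Wh r ∧
      (∑ x : 𝓧, ∑ y : 𝓨, Q x * Wstar Q Wh s a r x y * iDen Q Wh s a x y)
        = IML Q Wh s a - Real.sqrt (2 * r * Vsa Q Wh s a) ∧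
      sInf {v | ∃ P ∈ chiBall Q Wh r,
          v = ∑ x : 𝓧, ∑ y : 𝓨, Q x * P x y * iDen Q Wh s a x y}
        = IML Q Wh s a - Real.sqrt (2 * r * Vsa Q Wh s a)) :=
  stmt2_general Q hQpos Wh hWpos hWsum s a hV
end

section
/- For every r ≥ 0 and every conditional pmf W in the chi-squared ball B̃(Ŵ,r), the GMI and LM rates satisfy I_LM(Q,W) ≥ I_GMI(Q,W) ≥ I(Q,Ŵ) − √(2 r V_{1,0}), where V_{1,0} is the quantity V_{s,a} evaluated at s = 1 and a ≡ 0. In particular, inf_{W ∈ B̃(Ŵ,r)} I_GMI(Q,W) ≥ I(Q,Ŵ) − √(2 r V_{1,0}). -/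
open Real Filter

variable {𝓧 𝓨 : Type*} [Fintype 𝓧] [Fintype 𝓨]

/-- Mutual information `I(Q, Ŵ)`. -/
noncomputable def MI (Q : 𝓧 → ℝ) (Wh : 𝓧 → 𝓨 → ℝ) : ℝ :=
  ∑ x : 𝓧, ∑ y : 𝓨, Q x * Wh x y * Real.log (Wh x y / ∑ x' : 𝓧, Q x' * Wh x' y)

/-- LM rate of channel `W` under the decoding metric `Ŵ`. -/
noncomputable def Ilm (Q : 𝓧 → ℝ) (Wh W : 𝓧 → 𝓨 → ℝ) : ℝ :=
  sSup {v | ∃ s : ℝ, 0 ≤ s ∧ ∃ a : 𝓧 → ℝ,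
    v = ∑ x : 𝓧, ∑ y : 𝓨, Q x * W x y * iDen Q Wh s a x y}

/-- GMI rate of channel `W` under the decoding metric `Ŵ` (`a ≡ 0`). -/
noncomputable def Igmi (Q : 𝓧 → ℝ) (Wh W : 𝓧 → 𝓨 → ℝ) : ℝ :=
  sSup {v | ∃ s : ℝ, 0 ≤ s ∧
    v = ∑ x : 𝓧, ∑ y : 𝓨, Q x * W x y * iDen Q Wh s (fun _ => 0) x y}


set_option linter.unusedSectionVars false
set_option linter.unusedVariables false

lemma iDen_le [Nonempty 𝓧] (Q : 𝓧 → ℝ) (hQpos : ∀ x, 0 < Q x)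
    (Wh : 𝓧 → 𝓨 → ℝ) (hWpos : ∀ x y, 0 < Wh x y) (s : ℝ) (a : 𝓧 → ℝ) (x : 𝓧) (y : 𝓨) :
    iDen Q Wh s a x y ≤ -Real.log (Q x) := by
  have hN : (0:ℝ) < Wh x y ^ s * Real.exp (a x) :=
    mul_pos (Real.rpow_pos_of_pos (hWpos x y) s) (Real.exp_pos _)
  have hD : Q x * (Wh x y ^ s * Real.exp (a x))
      ≤ ∑ x' : 𝓧, Q x' * Wh x' y ^ s * Real.exp (a x') := by
    rw [← mul_assoc]
    exact Finset.single_le_sum (f := fun x' => Q x' * Wh x' y ^ s * Real.exp (a x'))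
      (fun x' _ => (mul_pos (mul_pos (hQpos x')
        (Real.rpow_pos_of_pos (hWpos x' y) s)) (Real.exp_pos _)).le) (Finset.mem_univ x)
  have hDpos : (0:ℝ) < Q x * (Wh x y ^ s * Real.exp (a x)) := mul_pos (hQpos x) hN
  have hdiv : (Wh x y ^ s * Real.exp (a x)) /
      (∑ x' : 𝓧, Q x' * Wh x' y ^ s * Real.exp (a x')) ≤ 1 / Q x := by
    rw [div_le_div_iff₀ (lt_of_lt_of_le hDpos hD) (hQpos x)]
    linarith [hD]
  have := Real.log_le_log (div_pos hN (lt_of_lt_of_le hDpos hD)) hdiv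
  unfold iDen
  rw [one_div, Real.log_inv] at this
  exact this

lemma lm_le_C [Nonempty 𝓧] (Q : 𝓧 → ℝ) (hQpos : ∀ x, 0 < Q x)
    (Wh : 𝓧 → 𝓨 → ℝ) (hWpos : ∀ x y, 0 < Wh x y)
    (W : 𝓧 → 𝓨 → ℝ) (hW : IsCondPMF W) (s : ℝ) (a : 𝓧 → ℝ) :
    ∑ x : 𝓧, ∑ y : 𝓨, Q x * W x y * iDen Q Wh s a x y
      ≤ ∑ x : 𝓧, Q x * (-Real.log (Q x)) := by
  calc ∑ x : 𝓧, ∑ y : 𝓨, Q x * W x y * iDen Q Wh s a x y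
      ≤ ∑ x : 𝓧, ∑ y : 𝓨, Q x * W x y * (-Real.log (Q x)) := by
        refine Finset.sum_le_sum fun x _ => Finset.sum_le_sum fun y _ => ?_
        exact mul_le_mul_of_nonneg_left (iDen_le Q hQpos Wh hWpos s a x y)
          (mul_nonneg (hQpos x).le (hW.1 x y))
    _ = ∑ x : 𝓧, Q x * (-Real.log (Q x)) := by
        refine Finset.sum_congr rfl fun x _ => ?_
        have e : ∀ y : 𝓨, Q x * W x y * (-Real.log (Q x))
            = (Q x * (-Real.log (Q x))) * W x y := fun y => by ring
        simp_rw [e, ← Finset.mul_sum, hW.2 x, mul_one]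

lemma key_bound [Nonempty 𝓧] [Nonempty 𝓨]
    (Q : 𝓧 → ℝ) (hQpos : ∀ x, 0 < Q x)
    (Wh : 𝓧 → 𝓨 → ℝ) (hWpos : ∀ x y, 0 < Wh x y) (hWsum : ∀ x, ∑ y : 𝓨, Wh x y = 1)
    (r : ℝ) (hr : 0 ≤ r) (W : 𝓧 → 𝓨 → ℝ) (hW : IsCondPMF W)
    (hball : (1 / 2) * ∑ x : 𝓧, ∑ y : 𝓨, Q x * (W x y - Wh x y) ^ 2 / Wh x y ≤ r) :
    MI Q Wh - Real.sqrt (2 * r * Vsa Q Wh 1 (fun _ => 0))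
      ≤ ∑ x : 𝓧, ∑ y : 𝓨, Q x * W x y * iDen Q Wh 1 (fun _ => 0) x y := by
  set i : 𝓧 → 𝓨 → ℝ := fun x y => Real.log (Wh x y / ∑ x' : 𝓧, Q x' * Wh x' y) with hi
  have hiden : ∀ x y, iDen Q Wh 1 (fun _ => 0) x y = i x y := by
    intro x y; simp [iDen, hi]
  set m : 𝓧 → ℝ := fun x => ∑ y : 𝓨, Wh x y * i x y with hm
  -- rewrite Vsa
  have hVeq : Vsa Q Wh 1 (fun _ => 0)
      = ∑ x : 𝓧, Q x * ∑ y : 𝓨, Wh x y * (i x y - m x) ^ 2 := by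
    unfold Vsa
    simp_rw [hiden]
    refine Finset.sum_congr rfl (fun x _ => ?_)
    congr 1
    have e : ∀ y : 𝓨, Wh x y * (i x y - m x) ^ 2
        = Wh x y * i x y ^ 2 - (2 * m x) * (Wh x y * i x y) + (m x) ^ 2 * Wh x y :=
      fun y => by ring
    simp_rw [e, Finset.sum_add_distrib, Finset.sum_sub_distrib, ← Finset.mul_sum, hWsum x]
    rw [hm]
    ring
  set V := Vsa Q Wh 1 (fun _ => 0) with hVdef
  have hVnn : 0 ≤ V := by
    rw [hVeq]
    exact Finset.sum_nonneg fun x _ => mul_nonneg (hQpos x).le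
      (Finset.sum_nonneg fun y _ => mul_nonneg (hWpos x y).le (sq_nonneg _))
  set S := ∑ x : 𝓧, ∑ y : 𝓨, Q x * W x y * i x y with hS
  set D := ∑ x : 𝓧, ∑ y : 𝓨, Q x * (W x y - Wh x y) * (i x y - m x) with hD
  have hMI : MI Q Wh = ∑ x : 𝓧, ∑ y : 𝓨, Q x * Wh x y * i x y := rfl
  have hDeq : D = S - MI Q Wh := by
    rw [hD, hS, hMI, ← Finset.sum_sub_distrib]
    refine Finset.sum_congr rfl (fun x _ => ?_)
    have e : ∀ y : 𝓨, Q x * (W x y - Wh x y) * (i x y - m x)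
        = (Q x * W x y * i x y - Q x * Wh x y * i x y)
          - ((Q x * m x) * W x y - (Q x * m x) * Wh x y) := fun y => by ring
    simp_rw [e, Finset.sum_sub_distrib, ← Finset.mul_sum, hW.2 x, hWsum x]
    ring
  -- Cauchy-Schwarz
  set f : 𝓧 × 𝓨 → ℝ := fun p => Real.sqrt (Q p.1 * Wh p.1 p.2) * (i p.1 p.2 - m p.1) with hf
  set g : 𝓧 × 𝓨 → ℝ := fun p => Real.sqrt (Q p.1 / Wh p.1 p.2) * (W p.1 p.2 - Wh p.1 p.2) with hg
  have hcs := Finset.sum_mul_sq_le_sq_mul_sq Finset.univ f g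
  have hA : ∑ p : 𝓧 × 𝓨, f p * g p = D := by
    have hfg : ∀ p : 𝓧 × 𝓨, f p * g p
        = Q p.1 * (W p.1 p.2 - Wh p.1 p.2) * (i p.1 p.2 - m p.1) := by
      intro p
      have h1 : Real.sqrt (Q p.1 * Wh p.1 p.2) * Real.sqrt (Q p.1 / Wh p.1 p.2) = Q p.1 := by
        rw [← Real.sqrt_mul (mul_nonneg (hQpos p.1).le (hWpos p.1 p.2).le),
          show Q p.1 * Wh p.1 p.2 * (Q p.1 / Wh p.1 p.2) = Q p.1 ^ 2 by
            rw [div_eq_mul_inv,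
              show Q p.1 * Wh p.1 p.2 * (Q p.1 * (Wh p.1 p.2)⁻¹)
                = Q p.1 ^ 2 * (Wh p.1 p.2 * (Wh p.1 p.2)⁻¹) from by ring,
              mul_inv_cancel₀ (hWpos p.1 p.2).ne', mul_one]]
        exact Real.sqrt_sq (hQpos p.1).le
      rw [hf, hg]
      calc Real.sqrt (Q p.1 * Wh p.1 p.2) * (i p.1 p.2 - m p.1)
            * (Real.sqrt (Q p.1 / Wh p.1 p.2) * (W p.1 p.2 - Wh p.1 p.2))
          = (Real.sqrt (Q p.1 * Wh p.1 p.2) * Real.sqrt (Q p.1 / Wh p.1 p.2))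
            * ((W p.1 p.2 - Wh p.1 p.2) * (i p.1 p.2 - m p.1)) := by ring
        _ = Q p.1 * (W p.1 p.2 - Wh p.1 p.2) * (i p.1 p.2 - m p.1) := by rw [h1]; ring
    simp_rw [hfg]
    rw [hD, Fintype.sum_prod_type]
  have hB : ∑ p : 𝓧 × 𝓨, f p ^ 2 = V := by
    have hf2 : ∀ p : 𝓧 × 𝓨, f p ^ 2 = Q p.1 * Wh p.1 p.2 * (i p.1 p.2 - m p.1) ^ 2 := by
      intro p
      rw [hf, mul_pow, Real.sq_sqrt (mul_nonneg (hQpos p.1).le (hWpos p.1 p.2).le)]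
    simp_rw [hf2]
    rw [hVeq, Fintype.sum_prod_type]
    refine Finset.sum_congr rfl fun x _ => ?_
    rw [Finset.mul_sum]
    exact Finset.sum_congr rfl fun y _ => by ring
  set T := ∑ x : 𝓧, ∑ y : 𝓨, Q x * (W x y - Wh x y) ^ 2 / Wh x y with hT
  have hC : ∑ p : 𝓧 × 𝓨, g p ^ 2 = T := by
    have hg2 : ∀ p : 𝓧 × 𝓨, g p ^ 2 = Q p.1 * (W p.1 p.2 - Wh p.1 p.2) ^ 2 / Wh p.1 p.2 := by
      intro p
      rw [hg, mul_pow, Real.sq_sqrt (div_nonneg (hQpos p.1).le (hWpos p.1 p.2).le)]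
      ring
    simp_rw [hg2]
    rw [hT, Fintype.sum_prod_type]
  rw [hA, hB, hC] at hcs
  have hT2r : T ≤ 2 * r := by linarith
  have hsq : D ^ 2 ≤ 2 * r * V := by
    calc D ^ 2 ≤ V * T := hcs
      _ ≤ V * (2 * r) := mul_le_mul_of_nonneg_left hT2r hVnn
      _ = 2 * r * V := by ring
  have habs : -D ≤ Real.sqrt (2 * r * V) := by
    have h1 : |D| ≤ Real.sqrt (2 * r * V) := by
      rw [← Real.sqrt_sq_eq_abs]
      exact Real.sqrt_le_sqrt hsq
    linarith [neg_abs_le D]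
  simp_rw [hiden]
  rw [← hS]
  linarith [hDeq]

/-- For any `W` in the chi-squared ball: `I_LM ≥ I_GMI ≥ I(Q,Ŵ) − √(2 r V_{1,0})`,
and hence the same lower bound holds for the worst-case GMI rate. -/
theorem stmt5 [Nonempty 𝓧] [Nonempty 𝓨]
    (Q : 𝓧 → ℝ) (hQpos : ∀ x, 0 < Q x) (hQle : ∀ x, Q x ≤ 1) (hQsum : ∑ x : 𝓧, Q x = 1)
    (Wh : 𝓧 → 𝓨 → ℝ) (hWpos : ∀ x y, 0 < Wh x y) (hWsum : ∀ x, ∑ y : 𝓨, Wh x y = 1) :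
    (∀ r : ℝ, 0 ≤ r → ∀ W ∈ chiBall Q Wh r,
      Igmi Q Wh W ≤ Ilm Q Wh W ∧
      MI Q Wh - Real.sqrt (2 * r * Vsa Q Wh 1 (fun _ => 0)) ≤ Igmi Q Wh W) ∧
    (∀ r : ℝ, 0 ≤ r →
      MI Q Wh - Real.sqrt (2 * r * Vsa Q Wh 1 (fun _ => 0))
        ≤ sInf {v | ∃ W ∈ chiBall Q Wh r, v = Igmi Q Wh W}) := by
  have hbddLM : ∀ W : 𝓧 → 𝓨 → ℝ, IsCondPMF W → BddAbove {v | ∃ s : ℝ, 0 ≤ s ∧ ∃ a : 𝓧 → ℝ,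
      v = ∑ x : 𝓧, ∑ y : 𝓨, Q x * W x y * iDen Q Wh s a x y} := by
    intro W hW
    refine ⟨∑ x : 𝓧, Q x * (-Real.log (Q x)), ?_⟩
    rintro v ⟨s, hs, a, rfl⟩
    exact lm_le_C Q hQpos Wh hWpos W hW s a
  have part1 : ∀ r : ℝ, 0 ≤ r → ∀ W ∈ chiBall Q Wh r,
      Igmi Q Wh W ≤ Ilm Q Wh W ∧
      MI Q Wh - Real.sqrt (2 * r * Vsa Q Wh 1 (fun _ => 0)) ≤ Igmi Q Wh W := by
    intro r hr W hWb
    obtain ⟨hWpmf, hball⟩ := hWb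
    have hsub : {v | ∃ s : ℝ, 0 ≤ s ∧
        v = ∑ x : 𝓧, ∑ y : 𝓨, Q x * W x y * iDen Q Wh s (fun _ => 0) x y}
        ⊆ {v | ∃ s : ℝ, 0 ≤ s ∧ ∃ a : 𝓧 → ℝ,
        v = ∑ x : 𝓧, ∑ y : 𝓨, Q x * W x y * iDen Q Wh s a x y} := by
      rintro v ⟨s, hs, rfl⟩; exact ⟨s, hs, fun _ => 0, rfl⟩
    have hbLM := hbddLM W hWpmf
    have hbG := BddAbove.mono hsub hbLM
    have hGne : Set.Nonempty {v | ∃ s : ℝ, 0 ≤ s ∧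
        v = ∑ x : 𝓧, ∑ y : 𝓨, Q x * W x y * iDen Q Wh s (fun _ => 0) x y} :=
      ⟨_, 1, zero_le_one, rfl⟩
    refine ⟨csSup_le_csSup hbLM hGne hsub, ?_⟩
    refine le_trans (key_bound Q hQpos Wh hWpos hWsum r hr W hWpmf hball) ?_
    exact le_csSup hbG ⟨1, zero_le_one, rfl⟩
  refine ⟨part1, ?_⟩
  intro r hr
  have hWhmem : Wh ∈ chiBall Q Wh r := by
    refine ⟨⟨fun x y => (hWpos x y).le, hWsum⟩, ?_⟩
    simpa using hr
  refine le_csInf ⟨Igmi Q Wh Wh, Wh, hWhmem, rfl⟩ ?_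
  rintro b ⟨W, hWb, rfl⟩
  exact (part1 r hr W hWb).2
end

section
/- Fix s ≥ 0 and ρ ∈ [0,1] with V_{s,ρ} > 0, let μ = Σ_{x,y} Q(x) Ŵ(y|x) ε_{s,ρ}(x,y), and define φ(x,y) = ( ε_{s,ρ}(x,y) − Σ_{y'} Ŵ(y'|x) ε_{s,ρ}(x,y') ) / √( Σ_x Q(x) [ Σ_y Ŵ(y|x) ε_{s,ρ}(x,y)² − (Σ_y Ŵ(y|x) ε_{s,ρ}(x,y))² ] / μ² ). Then for every r ≥ 0 and every conditional pmf P in the chi-squared ball B̃(Ŵ,r), one has Σ_{x,y} Q(x) P(y|x) ε_{s,ρ}(x,y) ≤ μ ( 1 + √(2 r V_{s,ρ}) ), equivalently −log Σ_{x,y} Q(x) P(y|x) ε_{s,ρ}(x,y) ≥ E^ML_{s,ρ} − log( 1 + √(2 r V_{s,ρ}) ). If moreover r ≤ min over (x,y) with φ(x,y) < 0 of μ² / (2 φ(x,y)²), equality is attained by the conditional pmf W̃*(y|x) = Ŵ(y|x) ( 1 + √(2r) · φ(x,y) / μ ), so the infimum over P ∈ B̃(Ŵ,r) of −log Σ Q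 P ε_{s,ρ} equals E^ML_{s,ρ} − log( 1 + √(2 r V_{s,ρ}) ). -/
open Real Filter

section Aux
variable {𝓧 𝓨 : Type*} [Fintype 𝓧] [Fintype 𝓨]

lemma auxCenter0 (W e : 𝓨 → ℝ) (hW : ∑ y : 𝓨, W y = 1) :
    ∑ y : 𝓨, W y * (e y - ∑ y' : 𝓨, W y' * e y') = 0 := by
  simp_rw [mul_sub, Finset.sum_sub_distrib, ← Finset.sum_mul, hW, one_mul, sub_self]

lemma auxCenter2 (W e : 𝓨 → ℝ) (hW : ∑ y : 𝓨, W y = 1) :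
    ∑ y : 𝓨, W y * (e y - ∑ y' : 𝓨, W y' * e y') ^ 2
      = (∑ y : 𝓨, W y * e y ^ 2) - (∑ y : 𝓨, W y * e y) ^ 2 := by
  have h : ∀ y, W y * (e y - ∑ y' : 𝓨, W y' * e y') ^ 2
      = W y * e y ^ 2 - (2 * (∑ y' : 𝓨, W y' * e y')) * (W y * e y)
        + ((∑ y' : 𝓨, W y' * e y') ^ 2) * W y := fun y => by ring
  simp_rw [h, Finset.sum_add_distrib, Finset.sum_sub_distrib, ← Finset.mul_sum, hW, mul_one]
  ring

lemma auxCenter1 (W e : 𝓨 → ℝ) :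
    ∑ y : 𝓨, W y * (e y - ∑ y' : 𝓨, W y' * e y') * e y
      = (∑ y : 𝓨, W y * e y ^ 2) - (∑ y : 𝓨, W y * e y) ^ 2 := by
  have h : ∀ y, W y * (e y - ∑ y' : 𝓨, W y' * e y') * e y
      = W y * e y ^ 2 - (∑ y' : 𝓨, W y' * e y') * (W y * e y) := fun y => by ring
  simp_rw [h, Finset.sum_sub_distrib, ← Finset.mul_sum]
  ring

lemma auxCS (Q : 𝓧 → ℝ) (W P e : 𝓧 → 𝓨 → ℝ) (hQ : ∀ x, 0 ≤ Q x) (hW : ∀ x y, 0 < W x y) :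
    (∑ x : 𝓧, ∑ y : 𝓨, Q x * (P x y - W x y) * e x y) ^ 2
      ≤ (∑ x : 𝓧, ∑ y : 𝓨, Q x * (P x y - W x y) ^ 2 / W x y)
        * (∑ x : 𝓧, ∑ y : 𝓨, Q x * W x y * e x y ^ 2) := by
  have key := Finset.sum_mul_sq_le_sq_mul_sq Finset.univ
    (fun p : 𝓧 × 𝓨 => Real.sqrt (Q p.1 / W p.1 p.2) * (P p.1 p.2 - W p.1 p.2))
    (fun p : 𝓧 × 𝓨 => Real.sqrt (Q p.1 * W p.1 p.2) * e p.1 p.2)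
  have hfg : ∀ p : 𝓧 × 𝓨,
      (Real.sqrt (Q p.1 / W p.1 p.2) * (P p.1 p.2 - W p.1 p.2))
        * (Real.sqrt (Q p.1 * W p.1 p.2) * e p.1 p.2)
      = Q p.1 * (P p.1 p.2 - W p.1 p.2) * e p.1 p.2 := by
    intro p
    rw [mul_mul_mul_comm, ← Real.sqrt_mul (div_nonneg (hQ _) (hW _ _).le)]
    have h2 : Q p.1 / W p.1 p.2 * (Q p.1 * W p.1 p.2) = Q p.1 ^ 2 := by
      field_simp [(hW p.1 p.2).ne']
    rw [h2, Real.sqrt_sq (hQ _)]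
    ring
  have hf2 : ∀ p : 𝓧 × 𝓨,
      (Real.sqrt (Q p.1 / W p.1 p.2) * (P p.1 p.2 - W p.1 p.2)) ^ 2
      = Q p.1 * (P p.1 p.2 - W p.1 p.2) ^ 2 / W p.1 p.2 := by
    intro p
    rw [mul_pow, Real.sq_sqrt (div_nonneg (hQ _) (hW _ _).le), div_mul_eq_mul_div]
  have hg2 : ∀ p : 𝓧 × 𝓨,
      (Real.sqrt (Q p.1 * W p.1 p.2) * e p.1 p.2) ^ 2
      = Q p.1 * W p.1 p.2 * e p.1 p.2 ^ 2 := by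
    intro p
    rw [mul_pow, Real.sq_sqrt (mul_nonneg (hQ _) (hW _ _).le)]
  simp only [hfg, hf2, hg2] at key
  calc (∑ x : 𝓧, ∑ y : 𝓨, Q x * (P x y - W x y) * e x y) ^ 2
      = (∑ p : 𝓧 × 𝓨, Q p.1 * (P p.1 p.2 - W p.1 p.2) * e p.1 p.2) ^ 2 := by
        rw [Fintype.sum_prod_type]
    _ ≤ (∑ p : 𝓧 × 𝓨, Q p.1 * (P p.1 p.2 - W p.1 p.2) ^ 2 / W p.1 p.2)
        * (∑ p : 𝓧 × 𝓨, Q p.1 * W p.1 p.2 * e p.1 p.2 ^ 2) := key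
    _ = _ := by rw [Fintype.sum_prod_type, Fintype.sum_prod_type]

end Aux


variable {𝓧 𝓨 : Type*} [Fintype 𝓧] [Fintype 𝓨]

/-- Mismatched exponent density `ε_{s,ρ}(x,y)` (with `a ≡ 0`). -/
noncomputable def epsDen (Q : 𝓧 → ℝ) (Wh : 𝓧 → 𝓨 → ℝ) (s ρ : ℝ) (x : 𝓧) (y : 𝓨) : ℝ :=
  ((∑ x' : 𝓧, Q x' * Wh x' y ^ s) / Wh x y ^ s) ^ ρ

/-- `μ = E_{Q×Ŵ}[ε_{s,ρ}]`. -/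
noncomputable def muEps (Q : 𝓧 → ℝ) (Wh : 𝓧 → 𝓨 → ℝ) (s ρ : ℝ) : ℝ :=
  ∑ x : 𝓧, ∑ y : 𝓨, Q x * Wh x y * epsDen Q Wh s ρ x y

/-- `E^ML_{s,ρ}`. -/
noncomputable def EML (Q : 𝓧 → ℝ) (Wh : 𝓧 → 𝓨 → ℝ) (s ρ : ℝ) : ℝ :=
  -Real.log (muEps Q Wh s ρ)

/-- `V_{s,ρ}`. -/
noncomputable def Veps (Q : 𝓧 → ℝ) (Wh : 𝓧 → 𝓨 → ℝ) (s ρ : ℝ) : ℝ :=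
  (∑ x : 𝓧, Q x * ((∑ y : 𝓨, Wh x y * (epsDen Q Wh s ρ x y) ^ 2)
      - (∑ y : 𝓨, Wh x y * epsDen Q Wh s ρ x y) ^ 2))
    / (muEps Q Wh s ρ) ^ 2

/-- `φ(x,y) = (ε_{s,ρ}(x,y) − E_Ŵ[ε_{s,ρ}(x,·)]) / √V_{s,ρ}`. -/
noncomputable def phiEps (Q : 𝓧 → ℝ) (Wh : 𝓧 → 𝓨 → ℝ) (s ρ : ℝ) (x : 𝓧) (y : 𝓨) : ℝ :=
  (epsDen Q Wh s ρ x y - ∑ y' : 𝓨, Wh x y' * epsDen Q Wh s ρ x y')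
    / Real.sqrt (Veps Q Wh s ρ)

/-- Worst-case channel `W̃*` for the Gallager function at radius `r`. -/
noncomputable def WstarE (Q : 𝓧 → ℝ) (Wh : 𝓧 → 𝓨 → ℝ) (s ρ r : ℝ) : 𝓧 → 𝓨 → ℝ :=
  fun x y => Wh x y * (1 + Real.sqrt (2 * r) * phiEps Q Wh s ρ x y / muEps Q Wh s ρ)

/-- Worst-case `−log E_{Q×P}[ε_{s,ρ}]` over the chi-squared ball: the bound holds for
every `P` in the ball, and is attained by `W̃*` when the radius is small enough. -/
theorem stmt10 [Nonempty 𝓧] [Nonempty 𝓨]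
    (Q : 𝓧 → ℝ) (hQpos : ∀ x, 0 < Q x) (hQle : ∀ x, Q x ≤ 1) (hQsum : ∑ x : 𝓧, Q x = 1)
    (Wh : 𝓧 → 𝓨 → ℝ) (hWpos : ∀ x y, 0 < Wh x y) (hWsum : ∀ x, ∑ y : 𝓨, Wh x y = 1)
    (s : ℝ) (hs : 0 ≤ s) (ρ : ℝ) (hρ : ρ ∈ Set.Icc (0 : ℝ) 1)
    (hV : 0 < Veps Q Wh s ρ) :
    (∀ r : ℝ, 0 ≤ r → ∀ P ∈ chiBall Q Wh r,
      (∑ x : 𝓧, ∑ y : 𝓨, Q x * P x y * epsDen Q Wh s ρ x y)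
        ≤ muEps Q Wh s ρ * (1 + Real.sqrt (2 * r * Veps Q Wh s ρ)) ∧
      EML Q Wh s ρ - Real.log (1 + Real.sqrt (2 * r * Veps Q Wh s ρ))
        ≤ -Real.log (∑ x : 𝓧, ∑ y : 𝓨, Q x * P x y * epsDen Q Wh s ρ x y)) ∧
    (∀ r : ℝ, 0 ≤ r →
      r ≤ sInf {v | ∃ x y, phiEps Q Wh s ρ x y < 0 ∧
          v = (muEps Q Wh s ρ) ^ 2 / (2 * (phiEps Q Wh s ρ x y) ^ 2)} →
      WstarE Q Wh s ρ r ∈ chiBall Q Wh r ∧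
      -Real.log (∑ x : 𝓧, ∑ y : 𝓨, Q x * WstarE Q Wh s ρ r x y * epsDen Q Wh s ρ x y)
        = EML Q Wh s ρ - Real.log (1 + Real.sqrt (2 * r * Veps Q Wh s ρ)) ∧
      sInf {v | ∃ P ∈ chiBall Q Wh r,
          v = -Real.log (∑ x : 𝓧, ∑ y : 𝓨, Q x * P x y * epsDen Q Wh s ρ x y)}
        = EML Q Wh s ρ - Real.log (1 + Real.sqrt (2 * r * Veps Q Wh s ρ))) := by
  have hε : ∀ x y, 0 < epsDen Q Wh s ρ x y := by
    intro x y
    simp only [epsDen]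
    have h1 : 0 < ∑ x' : 𝓧, Q x' * Wh x' y ^ s :=
      Finset.sum_pos (fun x' _ => mul_pos (hQpos x') (Real.rpow_pos_of_pos (hWpos x' y) s))
        Finset.univ_nonempty
    exact Real.rpow_pos_of_pos (div_pos h1 (Real.rpow_pos_of_pos (hWpos x y) s)) ρ
  have hμpos : 0 < muEps Q Wh s ρ := by
    simp only [muEps]
    exact Finset.sum_pos (fun x _ => Finset.sum_pos
      (fun y _ => mul_pos (mul_pos (hQpos x) (hWpos x y)) (hε x y)) Finset.univ_nonempty)
      Finset.univ_nonempty
  have hVnum : ∑ x : 𝓧, ∑ y : 𝓨, Q x * Wh x y *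
        (epsDen Q Wh s ρ x y - ∑ y' : 𝓨, Wh x y' * epsDen Q Wh s ρ x y') ^ 2
      = Veps Q Wh s ρ * (muEps Q Wh s ρ) ^ 2 := by
    rw [Veps, div_mul_cancel₀ _ (pow_ne_zero 2 hμpos.ne')]
    refine Finset.sum_congr rfl (fun x _ => ?_)
    rw [← auxCenter2 (Wh x) (epsDen Q Wh s ρ x) (hWsum x), Finset.mul_sum]
    exact Finset.sum_congr rfl fun y _ => by ring
  have part1 : ∀ r : ℝ, 0 ≤ r → ∀ P ∈ chiBall Q Wh r,
      (∑ x : 𝓧, ∑ y : 𝓨, Q x * P x y * epsDen Q Wh s ρ x y)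
        ≤ muEps Q Wh s ρ * (1 + Real.sqrt (2 * r * Veps Q Wh s ρ)) ∧
      EML Q Wh s ρ - Real.log (1 + Real.sqrt (2 * r * Veps Q Wh s ρ))
        ≤ -Real.log (∑ x : 𝓧, ∑ y : 𝓨, Q x * P x y * epsDen Q Wh s ρ x y) := by
    rintro r hr P ⟨⟨hP0, hP1⟩, hchi⟩
    have hdiff : ∑ x : 𝓧, ∑ y : 𝓨, Q x * (P x y - Wh x y)
          * (epsDen Q Wh s ρ x y - ∑ y' : 𝓨, Wh x y' * epsDen Q Wh s ρ x y')
        = (∑ x : 𝓧, ∑ y : 𝓨, Q x * P x y * epsDen Q Wh s ρ x y) - muEps Q Wh s ρ := by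
      rw [muEps, ← Finset.sum_sub_distrib]
      refine Finset.sum_congr rfl fun x _ => ?_
      have expand : ∀ y, Q x * (P x y - Wh x y)
            * (epsDen Q Wh s ρ x y - ∑ y' : 𝓨, Wh x y' * epsDen Q Wh s ρ x y')
          = (Q x * P x y * epsDen Q Wh s ρ x y - Q x * Wh x y * epsDen Q Wh s ρ x y)
            - (Q x * (∑ y' : 𝓨, Wh x y' * epsDen Q Wh s ρ x y')) * (P x y - Wh x y) :=
        fun y => by ring
      simp_rw [expand, Finset.sum_sub_distrib, ← Finset.mul_sum]
      rw [Finset.sum_sub_distrib, hP1 x, hWsum x, sub_self, mul_zero, sub_zero]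
    have hchi2 : ∑ x : 𝓧, ∑ y : 𝓨, Q x * (P x y - Wh x y) ^ 2 / Wh x y ≤ 2 * r := by
      have := hchi
      linarith
    have hCS : (∑ x : 𝓧, ∑ y : 𝓨, Q x * (P x y - Wh x y)
          * (epsDen Q Wh s ρ x y - ∑ y' : 𝓨, Wh x y' * epsDen Q Wh s ρ x y')) ^ 2
        ≤ (∑ x : 𝓧, ∑ y : 𝓨, Q x * (P x y - Wh x y) ^ 2 / Wh x y)
          * (∑ x : 𝓧, ∑ y : 𝓨, Q x * Wh x y
              * (epsDen Q Wh s ρ x y - ∑ y' : 𝓨, Wh x y' * epsDen Q Wh s ρ x y') ^ 2) :=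
      auxCS Q Wh P
        (fun x y => epsDen Q Wh s ρ x y - ∑ y' : 𝓨, Wh x y' * epsDen Q Wh s ρ x y')
        (fun x => (hQpos x).le) hWpos
    have hNnn : (0:ℝ) ≤ ∑ x : 𝓧, ∑ y : 𝓨, Q x * Wh x y
        * (epsDen Q Wh s ρ x y - ∑ y' : 𝓨, Wh x y' * epsDen Q Wh s ρ x y') ^ 2 :=
      Finset.sum_nonneg fun x _ => Finset.sum_nonneg fun y _ =>
        mul_nonneg (mul_nonneg (hQpos x).le (hWpos x y).le) (sq_nonneg _)
    have hsq : ((∑ x : 𝓧, ∑ y : 𝓨, Q x * P x y * epsDen Q Wh s ρ x y) - muEps Q Wh s ρ) ^ 2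
        ≤ (2 * r * Veps Q Wh s ρ) * (muEps Q Wh s ρ) ^ 2 := by
      rw [← hdiff]
      calc _ ≤ _ := hCS
        _ ≤ (2 * r) * (∑ x : 𝓧, ∑ y : 𝓨, Q x * Wh x y
              * (epsDen Q Wh s ρ x y - ∑ y' : 𝓨, Wh x y' * epsDen Q Wh s ρ x y') ^ 2) :=
          mul_le_mul_of_nonneg_right hchi2 hNnn
        _ = (2 * r * Veps Q Wh s ρ) * (muEps Q Wh s ρ) ^ 2 := by rw [hVnum]; ring
    have hle : (∑ x : 𝓧, ∑ y : 𝓨, Q x * P x y * epsDen Q Wh s ρ x y) - muEps Q Wh s ρ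
        ≤ Real.sqrt (2 * r * Veps Q Wh s ρ) * muEps Q Wh s ρ := by
      have h1 : (∑ x : 𝓧, ∑ y : 𝓨, Q x * P x y * epsDen Q Wh s ρ x y) - muEps Q Wh s ρ
          ≤ Real.sqrt (((∑ x : 𝓧, ∑ y : 𝓨, Q x * P x y * epsDen Q Wh s ρ x y)
              - muEps Q Wh s ρ) ^ 2) := by
        rw [Real.sqrt_sq_eq_abs]; exact le_abs_self _
      have h2 := Real.sqrt_le_sqrt hsq
      rw [Real.sqrt_mul (by positivity) ((muEps Q Wh s ρ) ^ 2),
        Real.sqrt_sq hμpos.le] at h2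
      linarith
    have hupper : (∑ x : 𝓧, ∑ y : 𝓨, Q x * P x y * epsDen Q Wh s ρ x y)
        ≤ muEps Q Wh s ρ * (1 + Real.sqrt (2 * r * Veps Q Wh s ρ)) := by nlinarith [hle]
    refine ⟨hupper, ?_⟩
    have hPpos : 0 < ∑ x : 𝓧, ∑ y : 𝓨, Q x * P x y * epsDen Q Wh s ρ x y := by
      refine Finset.sum_pos (fun x _ => ?_) Finset.univ_nonempty
      have hne : ∑ y : 𝓨, P x y ≠ 0 := by rw [hP1 x]; exact one_ne_zero
      obtain ⟨y0, -, hy0⟩ := Finset.exists_ne_zero_of_sum_ne_zero hne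
      refine Finset.sum_pos' (fun y _ => by
        exact mul_nonneg (mul_nonneg (hQpos x).le (hP0 x y)) (hε x y).le)
        ⟨y0, Finset.mem_univ _,
          mul_pos (mul_pos (hQpos x) ((hP0 x y0).lt_of_ne' hy0)) (hε x y0)⟩
    have h1pt : (0:ℝ) < 1 + Real.sqrt (2 * r * Veps Q Wh s ρ) := by positivity
    have hlog := Real.log_le_log hPpos hupper
    rw [Real.log_mul hμpos.ne' h1pt.ne'] at hlog
    simp only [EML]
    linarith
  refine ⟨part1, fun r hr hrle => ?_⟩
  have hr2 : (0:ℝ) ≤ 2 * r := by linarith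
  have hsV : 0 < Real.sqrt (Veps Q Wh s ρ) := Real.sqrt_pos.mpr hV
  have hVnum' : ∑ x : 𝓧, Q x * ((∑ y : 𝓨, Wh x y * (epsDen Q Wh s ρ x y) ^ 2)
        - (∑ y : 𝓨, Wh x y * epsDen Q Wh s ρ x y) ^ 2)
      = Veps Q Wh s ρ * (muEps Q Wh s ρ) ^ 2 := by
    rw [Veps, div_mul_cancel₀ _ (pow_ne_zero 2 hμpos.ne')]
  have hφ0 : ∀ x, ∑ y : 𝓨, Wh x y * phiEps Q Wh s ρ x y = 0 := by
    intro x
    simp only [phiEps]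
    simp_rw [← mul_div_assoc, ← Finset.sum_div]
    rw [auxCenter0 (Wh x) (epsDen Q Wh s ρ x) (hWsum x), zero_div]
  have hφsq : ∑ x : 𝓧, ∑ y : 𝓨, Q x * Wh x y * (phiEps Q Wh s ρ x y) ^ 2
      = (muEps Q Wh s ρ) ^ 2 := by
    simp only [phiEps, div_pow, Real.sq_sqrt hV.le]
    simp_rw [← mul_div_assoc, ← Finset.sum_div]
    rw [hVnum, mul_comm, mul_div_assoc, div_self hV.ne', mul_one]
  have hφe : ∑ x : 𝓧, ∑ y : 𝓨, Q x * Wh x y * phiEps Q Wh s ρ x y * epsDen Q Wh s ρ x y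
      = Real.sqrt (Veps Q Wh s ρ) * (muEps Q Wh s ρ) ^ 2 := by
    simp only [phiEps]
    have hterm : ∀ (x : 𝓧) (y : 𝓨), Q x * Wh x y
          * ((epsDen Q Wh s ρ x y - ∑ y' : 𝓨, Wh x y' * epsDen Q Wh s ρ x y')
              / Real.sqrt (Veps Q Wh s ρ)) * epsDen Q Wh s ρ x y
        = (Q x * (Wh x y * (epsDen Q Wh s ρ x y
            - ∑ y' : 𝓨, Wh x y' * epsDen Q Wh s ρ x y') * epsDen Q Wh s ρ x y))
          / Real.sqrt (Veps Q Wh s ρ) := fun x y => by ring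
    simp_rw [hterm, ← Finset.sum_div, ← Finset.mul_sum,
      auxCenter1 (Wh _) (epsDen Q Wh s ρ _)]
    rw [hVnum', div_eq_iff hsV.ne']
    linear_combination (-(muEps Q Wh s ρ ^ 2)) * Real.mul_self_sqrt hV.le
  have hfac : ∀ x y, 0 ≤ 1 + Real.sqrt (2 * r) * phiEps Q Wh s ρ x y / muEps Q Wh s ρ := by
    intro x y
    rcases le_or_gt 0 (phiEps Q Wh s ρ x y) with h | h
    · have : 0 ≤ Real.sqrt (2 * r) * phiEps Q Wh s ρ x y / muEps Q Wh s ρ :=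
        div_nonneg (mul_nonneg (Real.sqrt_nonneg _) h) hμpos.le
      linarith
    · have hφ2 : 0 < (phiEps Q Wh s ρ x y) ^ 2 := by nlinarith
      have hbdd : BddBelow {v | ∃ x y, phiEps Q Wh s ρ x y < 0 ∧
          v = (muEps Q Wh s ρ) ^ 2 / (2 * (phiEps Q Wh s ρ x y) ^ 2)} := by
        refine ⟨0, ?_⟩
        rintro v ⟨x', y', h', rfl⟩
        have : 0 < (phiEps Q Wh s ρ x' y') ^ 2 := by nlinarith
        positivity
      have hrle2 : r ≤ (muEps Q Wh s ρ) ^ 2 / (2 * (phiEps Q Wh s ρ x y) ^ 2) :=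
        hrle.trans (csInf_le hbdd ⟨x, y, h, rfl⟩)
      have hkey : r * (2 * (phiEps Q Wh s ρ x y) ^ 2) ≤ (muEps Q Wh s ρ) ^ 2 :=
        (le_div_iff₀ (by linarith)).mp hrle2
      have h3 : Real.sqrt (2 * r) * (-(phiEps Q Wh s ρ x y))
          = Real.sqrt (2 * r * (phiEps Q Wh s ρ x y) ^ 2) := by
        rw [Real.sqrt_mul hr2, Real.sqrt_sq_eq_abs, abs_of_neg h]
      have h4 : Real.sqrt (2 * r * (phiEps Q Wh s ρ x y) ^ 2) ≤ muEps Q Wh s ρ := by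
        rw [show muEps Q Wh s ρ = Real.sqrt ((muEps Q Wh s ρ) ^ 2) from
          (Real.sqrt_sq hμpos.le).symm]
        exact Real.sqrt_le_sqrt (by nlinarith)
      have h45 : Real.sqrt (2 * r) * (-(phiEps Q Wh s ρ x y)) ≤ muEps Q Wh s ρ := by
        rw [h3]; exact h4
      have h5 : (-1 : ℝ) ≤ Real.sqrt (2 * r) * phiEps Q Wh s ρ x y / muEps Q Wh s ρ := by
        rw [le_div_iff₀ hμpos]; nlinarith
      linarith
  have hrow : ∀ x, ∑ y : 𝓨, WstarE Q Wh s ρ r x y = 1 := by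
    intro x
    simp only [WstarE]
    have hterm : ∀ y : 𝓨, Wh x y * (1 + Real.sqrt (2 * r) * phiEps Q Wh s ρ x y / muEps Q Wh s ρ)
        = Wh x y + (Real.sqrt (2 * r) / muEps Q Wh s ρ) * (Wh x y * phiEps Q Wh s ρ x y) :=
      fun y => by ring
    simp_rw [hterm, Finset.sum_add_distrib, ← Finset.mul_sum, hφ0 x, mul_zero, hWsum x, add_zero]
  have hchiW : (1 / 2 : ℝ) * ∑ x : 𝓧, ∑ y : 𝓨,
      Q x * (WstarE Q Wh s ρ r x y - Wh x y) ^ 2 / Wh x y = r := by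
    have hterm : ∀ (x : 𝓧) (y : 𝓨), Q x * (WstarE Q Wh s ρ r x y - Wh x y) ^ 2 / Wh x y
        = (Real.sqrt (2 * r) ^ 2 / (muEps Q Wh s ρ) ^ 2)
          * (Q x * Wh x y * (phiEps Q Wh s ρ x y) ^ 2) := by
      intro x y
      simp only [WstarE]
      field_simp [(hWpos x y).ne', hμpos.ne']
      ring
    simp_rw [hterm, ← Finset.mul_sum]
    rw [hφsq, Real.sq_sqrt hr2, div_mul_cancel₀ _ (pow_ne_zero 2 hμpos.ne')]
    ring
  have hball : WstarE Q Wh s ρ r ∈ chiBall Q Wh r := by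
    refine ⟨⟨fun x y => mul_nonneg (hWpos x y).le (hfac x y), hrow⟩, le_of_eq hchiW⟩
  have h1pt : (0:ℝ) < 1 + Real.sqrt (2 * r * Veps Q Wh s ρ) := by positivity
  have hval : ∑ x : 𝓧, ∑ y : 𝓨, Q x * WstarE Q Wh s ρ r x y * epsDen Q Wh s ρ x y
      = muEps Q Wh s ρ * (1 + Real.sqrt (2 * r * Veps Q Wh s ρ)) := by
    have hterm : ∀ (x : 𝓧) (y : 𝓨), Q x * WstarE Q Wh s ρ r x y * epsDen Q Wh s ρ x y
        = Q x * Wh x y * epsDen Q Wh s ρ x y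
          + (Real.sqrt (2 * r) / muEps Q Wh s ρ)
            * (Q x * Wh x y * phiEps Q Wh s ρ x y * epsDen Q Wh s ρ x y) := by
      intro x y
      simp only [WstarE]
      field_simp
    simp_rw [hterm, Finset.sum_add_distrib, ← Finset.mul_sum]
    have hmu : ∑ x : 𝓧, ∑ y : 𝓨, Q x * Wh x y * epsDen Q Wh s ρ x y = muEps Q Wh s ρ := rfl
    rw [hmu, hφe, Real.sqrt_mul hr2]
    field_simp
  have hlogeq : -Real.log (∑ x : 𝓧, ∑ y : 𝓨,
        Q x * WstarE Q Wh s ρ r x y * epsDen Q Wh s ρ x y)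
      = EML Q Wh s ρ - Real.log (1 + Real.sqrt (2 * r * Veps Q Wh s ρ)) := by
    rw [hval, Real.log_mul hμpos.ne' h1pt.ne']
    simp only [EML]
    ring
  refine ⟨hball, hlogeq, ?_⟩
  have hlb : ∀ v ∈ {v | ∃ P ∈ chiBall Q Wh r,
      v = -Real.log (∑ x : 𝓧, ∑ y : 𝓨, Q x * P x y * epsDen Q Wh s ρ x y)},
      EML Q Wh s ρ - Real.log (1 + Real.sqrt (2 * r * Veps Q Wh s ρ)) ≤ v := by
    rintro v ⟨P, hP, rfl⟩
    exact (part1 r hr P hP).2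
  have hmemE : EML Q Wh s ρ - Real.log (1 + Real.sqrt (2 * r * Veps Q Wh s ρ)) ∈
      {v | ∃ P ∈ chiBall Q Wh r,
        v = -Real.log (∑ x : 𝓧, ∑ y : 𝓨, Q x * P x y * epsDen Q Wh s ρ x y)} :=
    ⟨WstarE Q Wh s ρ r, hball, hlogeq.symm⟩
  exact le_antisymm (csInf_le ⟨_, hlb⟩ hmemE) (le_csInf ⟨_, hmemE⟩ hlb)
end

section
/- Suppose |𝒳| = |𝒴| = n, Q is the uniform distribution Q(x) = 1/n, and Ŵ is symmetric in Gallager's sense: there is a probability vector Ŵsym on 𝒴 with Ŵsym(y) > 0 such that every row y ↦ Ŵ(y|x) is a permutation of Ŵsym, and every column x ↦ Ŵ(y|x) is a permutation of the first column. Then for every s ≥ 0: I^ML_{s,0} = log( n / κ_s ) − s H(Ŵsym) and V_{s,0} = s² ( Σ_y Ŵsym(y) (log Ŵsym(y))² − ( Σ_y Ŵsym(y) log Ŵsym(y) )² ), where κ_s = Σ_y Ŵsym(y)^s and H(Ŵsym) = −Σ_y Ŵsym(y) log Ŵsym(y). -/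
open Real Filter

variable {𝓧 𝓨 : Type*} [Fintype 𝓧] [Fintype 𝓨]

/-- For a Gallager-symmetric estimated channel `Ŵ` with uniform input distribution,
`I^ML_{s,0} = log(n/κ_s) − s·H(Ŵsym)` and
`V_{s,0} = s² · Var_{Ŵsym}[log Ŵsym]`. -/
theorem stmt11 [Nonempty 𝓧] [Nonempty 𝓨]
    (n : ℕ) (hX : Fintype.card 𝓧 = n) (hY : Fintype.card 𝓨 = n)
    (Q : 𝓧 → ℝ) (hQ : ∀ x, Q x = (n : ℝ)⁻¹)
    (Wh : 𝓧 → 𝓨 → ℝ) (hWpos : ∀ x y, 0 < Wh x y) (hWsum : ∀ x, ∑ y : 𝓨, Wh x y = 1)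
    (Wsym : 𝓨 → ℝ) (hSpos : ∀ y, 0 < Wsym y) (hSsum : ∑ y : 𝓨, Wsym y = 1)
    (hrows : ∀ x : 𝓧, ∃ σ : 𝓨 ≃ 𝓨, ∀ y, Wh x y = Wsym (σ y))
    (hcols : ∀ y y' : 𝓨, ∃ τ : 𝓧 ≃ 𝓧, ∀ x, Wh x y = Wh (τ x) y') :
    ∀ s : ℝ, 0 ≤ s →
      IML Q Wh s (fun _ => 0)
          = Real.log ((n : ℝ) / ∑ y : 𝓨, Wsym y ^ s)
            - s * (-(∑ y : 𝓨, Wsym y * Real.log (Wsym y))) ∧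
      Vsa Q Wh s (fun _ => 0)
          = s ^ 2 * ((∑ y : 𝓨, Wsym y * (Real.log (Wsym y)) ^ 2)
            - (∑ y : 𝓨, Wsym y * Real.log (Wsym y)) ^ 2) := by
  intro s hs
  have hn : 0 < n := hX ▸ Fintype.card_pos
  have hn' : (0:ℝ) < n := Nat.cast_pos.mpr hn
  set κ : ℝ := ∑ y : 𝓨, Wsym y ^ s with hκdef
  have hκpos : 0 < κ := Finset.sum_pos (fun y _ => Real.rpow_pos_of_pos (hSpos y) s)
    Finset.univ_nonempty
  have hrowκ : ∀ x, ∑ y : 𝓨, Wh x y ^ s = κ := by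
    intro x
    obtain ⟨σ, hσ⟩ := hrows x
    calc ∑ y, Wh x y ^ s = ∑ y, Wsym (σ y) ^ s := by simp [hσ]
      _ = κ := σ.sum_comp (fun y => Wsym y ^ s)
  have hcolconst : ∀ y y' : 𝓨, ∑ x : 𝓧, Wh x y ^ s = ∑ x : 𝓧, Wh x y' ^ s := by
    intro y y'
    obtain ⟨τ, hτ⟩ := hcols y y'
    calc ∑ x, Wh x y ^ s = ∑ x, Wh (τ x) y' ^ s := by simp [hτ]
      _ = _ := τ.sum_comp (fun x => Wh x y' ^ s)
  have hcolκ : ∀ y, ∑ x : 𝓧, Wh x y ^ s = κ := by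
    intro y
    have h1 : ∑ y' : 𝓨, ∑ x : 𝓧, Wh x y' ^ s = (n:ℝ) * (∑ x : 𝓧, Wh x y ^ s) := by
      rw [Finset.sum_congr rfl (fun y' _ => hcolconst y' y), Finset.sum_const, Finset.card_univ, hY, nsmul_eq_mul]
    have h2 : ∑ y' : 𝓨, ∑ x : 𝓧, Wh x y' ^ s = (n:ℝ) * κ := by
      rw [Finset.sum_comm, Finset.sum_congr rfl (fun x _ => hrowκ x), Finset.sum_const, Finset.card_univ, hX, nsmul_eq_mul]
    exact mul_left_cancel₀ (ne_of_gt hn') (h1 ▸ h2)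
  set c : ℝ := Real.log ((n:ℝ) / κ) with hcdef
  have hiDen : ∀ (x : 𝓧) (y : 𝓨),
      iDen Q Wh s (fun _ => 0) x y = s * Real.log (Wh x y) + c := by
    intro x y
    have hden : (∑ x' : 𝓧, Q x' * Wh x' y ^ s * Real.exp 0) = (n:ℝ)⁻¹ * κ := by
      simp only [Real.exp_zero, mul_one, hQ]
      rw [← Finset.mul_sum, hcolκ]
    unfold iDen
    rw [hden, Real.exp_zero, mul_one,
      Real.log_div (Real.rpow_pos_of_pos (hWpos x y) s).ne' (mul_ne_zero (inv_ne_zero (ne_of_gt hn')) (ne_of_gt hκpos)),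
      Real.log_rpow (hWpos x y), Real.log_mul (inv_ne_zero (ne_of_gt hn')) (ne_of_gt hκpos),
      Real.log_inv, hcdef, Real.log_div (ne_of_gt hn') (ne_of_gt hκpos)]
    ring
  set T : ℝ := ∑ y : 𝓨, Wsym y * Real.log (Wsym y) with hTdef
  set S2 : ℝ := ∑ y : 𝓨, Wsym y * (Real.log (Wsym y)) ^ 2 with hS2def
  have hM1 : ∀ x, ∑ y : 𝓨, Wh x y * Real.log (Wh x y) = T := by
    intro x
    obtain ⟨σ, hσ⟩ := hrows x
    calc ∑ y, Wh x y * Real.log (Wh x y) = ∑ y, Wsym (σ y) * Real.log (Wsym (σ y)) := by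
          simp [hσ]
      _ = T := σ.sum_comp (fun y => Wsym y * Real.log (Wsym y))
  have hM2 : ∀ x, ∑ y : 𝓨, Wh x y * (Real.log (Wh x y)) ^ 2 = S2 := by
    intro x
    obtain ⟨σ, hσ⟩ := hrows x
    calc ∑ y, Wh x y * (Real.log (Wh x y)) ^ 2
        = ∑ y, Wsym (σ y) * (Real.log (Wsym (σ y))) ^ 2 := by simp [hσ]
      _ = S2 := σ.sum_comp (fun y => Wsym y * (Real.log (Wsym y)) ^ 2)
  have hE1 : ∀ x, ∑ y : 𝓨, Wh x y * iDen Q Wh s (fun _ => 0) x y = s * T + c := by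
    intro x
    have : ∀ y : 𝓨, Wh x y * iDen Q Wh s (fun _ => 0) x y
        = s * (Wh x y * Real.log (Wh x y)) + c * Wh x y := by
      intro y; rw [hiDen]; ring
    rw [Finset.sum_congr rfl (fun y _ => this y), Finset.sum_add_distrib,
      ← Finset.mul_sum, ← Finset.mul_sum, hM1, hWsum, mul_one]
  have hE2 : ∀ x, ∑ y : 𝓨, Wh x y * (iDen Q Wh s (fun _ => 0) x y) ^ 2
      = s ^ 2 * S2 + 2 * s * c * T + c ^ 2 := by
    intro x
    have : ∀ y : 𝓨, Wh x y * (iDen Q Wh s (fun _ => 0) x y) ^ 2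
        = s ^ 2 * (Wh x y * (Real.log (Wh x y)) ^ 2)
          + 2 * s * c * (Wh x y * Real.log (Wh x y)) + c ^ 2 * Wh x y := by
      intro y; rw [hiDen]; ring
    rw [Finset.sum_congr rfl (fun y _ => this y), Finset.sum_add_distrib,
      Finset.sum_add_distrib, ← Finset.mul_sum, ← Finset.mul_sum, ← Finset.mul_sum,
      hM1, hM2, hWsum, mul_one]
  constructor
  · unfold IML
    have : ∀ x : 𝓧, ∑ y : 𝓨, Q x * Wh x y * iDen Q Wh s (fun _ => 0) x y
        = (n:ℝ)⁻¹ * (s * T + c) := by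
      intro x
      have h : ∀ y : 𝓨, Q x * Wh x y * iDen Q Wh s (fun _ => 0) x y
          = (n:ℝ)⁻¹ * (Wh x y * iDen Q Wh s (fun _ => 0) x y) := by
        intro y; rw [hQ]; ring
      rw [Finset.sum_congr rfl (fun y _ => h y), ← Finset.mul_sum, hE1]
    rw [Finset.sum_congr rfl (fun x _ => this x), Finset.sum_const, Finset.card_univ, hX, nsmul_eq_mul,
      ← mul_assoc, mul_inv_cancel₀ (ne_of_gt hn'), one_mul]
    ring
  · unfold Vsa
    have : ∀ x : 𝓧, Q x * ((∑ y : 𝓨, Wh x y * (iDen Q Wh s (fun _ => 0) x y) ^ 2)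
        - (∑ y : 𝓨, Wh x y * iDen Q Wh s (fun _ => 0) x y) ^ 2)
        = (n:ℝ)⁻¹ * (s ^ 2 * (S2 - T ^ 2)) := by
      intro x
      rw [hQ, hE1, hE2]; ring
    rw [Finset.sum_congr rfl (fun x _ => this x), Finset.sum_const, Finset.card_univ, hX, nsmul_eq_mul,
      ← mul_assoc, mul_inv_cancel₀ (ne_of_gt hn'), one_mul]
end

section
/- Let W be any conditional pmf on 𝒴 given 𝒳 (the true channel) and q : 𝒳 × 𝒴 → (0,∞) any decoding metric. For every ρ ∈ [0,1] and s ≥ 0, Jensen's inequality gives −log Σ_{x,y} Q(x) W(y|x) ε_{s,0,ρ}(x,y) ≤ −Σ_x Q(x) log Σ_y W(y|x) ε_{s,0,ρ}(x,y), and consequently E0^iid(Q,ρ) ≤ E0^cc(Q,ρ) for every ρ ∈ [0,1], and E_r^iid(Q,R) ≤ E_r^cc(Q,R) for every rate R ≥ 0. -/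
open Real Filter

variable {𝓧 𝓨 : Type*} [Fintype 𝓧] [Fintype 𝓨]

/-- Mismatched exponent density `ε_{s,a,ρ}(x,y)` for an arbitrary decoding metric `q`. -/
noncomputable def epsA (Q : 𝓧 → ℝ) (q : 𝓧 → 𝓨 → ℝ) (s : ℝ) (a : 𝓧 → ℝ) (ρ : ℝ)
    (x : 𝓧) (y : 𝓨) : ℝ :=
  ((∑ x' : 𝓧, Q x' * q x' y ^ s * Real.exp (a x')) / (q x y ^ s * Real.exp (a x))) ^ ρ

/-- i.i.d. mismatched Gallager function `E₀^iid(Q, ρ)`. -/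
noncomputable def E0iid (Q : 𝓧 → ℝ) (q W : 𝓧 → 𝓨 → ℝ) (ρ : ℝ) : ℝ :=
  sSup {v | ∃ s : ℝ, 0 ≤ s ∧
    v = -Real.log (∑ x : 𝓧, ∑ y : 𝓨, Q x * W x y * epsA Q q s (fun _ => 0) ρ x y)}

/-- Constant-composition mismatched Gallager function `E₀^cc(Q, ρ)`. -/
noncomputable def E0cc (Q : 𝓧 → ℝ) (q W : 𝓧 → 𝓨 → ℝ) (ρ : ℝ) : ℝ :=
  sSup {v | ∃ s : ℝ, 0 ≤ s ∧ ∃ a : 𝓧 → ℝ,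
    v = -∑ x : 𝓧, Q x * Real.log (∑ y : 𝓨, W x y * epsA Q q s a ρ x y)}

/-- i.i.d. random-coding exponent `E_r^iid(Q, R)`. -/
noncomputable def ErIid (Q : 𝓧 → ℝ) (q W : 𝓧 → 𝓨 → ℝ) (R : ℝ) : ℝ :=
  sSup {v | ∃ ρ ∈ Set.Icc (0 : ℝ) 1, v = E0iid Q q W ρ - ρ * R}

/-- Constant-composition random-coding exponent `E_r^cc(Q, R)`. -/
noncomputable def ErCc (Q : 𝓧 → ℝ) (q W : 𝓧 → 𝓨 → ℝ) (R : ℝ) : ℝ :=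
  sSup {v | ∃ ρ ∈ Set.Icc (0 : ℝ) 1, v = E0cc Q q W ρ - ρ * R}

section Aux

variable [Nonempty 𝓧] [Nonempty 𝓨]

/-- For `ρ ∈ [0,1]`, `Q x ≤ ε_{s,a,ρ}(x,y)`. -/
lemma Q_le_epsA (Q : 𝓧 → ℝ) (hQpos : ∀ x, 0 < Q x) (hQle : ∀ x, Q x ≤ 1)
    (q : 𝓧 → 𝓨 → ℝ) (hq : ∀ x y, 0 < q x y) (s : ℝ) (a : 𝓧 → ℝ)
    {ρ : ℝ} (hρ0 : 0 ≤ ρ) (hρ1 : ρ ≤ 1) (x : 𝓧) (y : 𝓨) :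
    Q x ≤ epsA Q q s a ρ x y := by
  have hD : 0 < q x y ^ s * Real.exp (a x) :=
    mul_pos (Real.rpow_pos_of_pos (hq x y) s) (Real.exp_pos _)
  have hbase : Q x ≤ (∑ x' : 𝓧, Q x' * q x' y ^ s * Real.exp (a x')) /
      (q x y ^ s * Real.exp (a x)) := by
    rw [le_div_iff₀ hD]
    calc Q x * (q x y ^ s * Real.exp (a x)) = Q x * q x y ^ s * Real.exp (a x) := by ring
    _ ≤ ∑ x' : 𝓧, Q x' * q x' y ^ s * Real.exp (a x') := by
        exact Finset.single_le_sum (f := fun x' => Q x' * q x' y ^ s * Real.exp (a x'))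
          (fun x' _ => mul_nonneg (mul_nonneg (hQpos x').le
            (Real.rpow_pos_of_pos (hq x' y) s).le) (Real.exp_pos _).le) (Finset.mem_univ x)
  calc Q x = Q x ^ (1 : ℝ) := (Real.rpow_one _).symm
  _ ≤ Q x ^ ρ := Real.rpow_le_rpow_of_exponent_ge (hQpos x) (hQle x) hρ1
  _ ≤ _ := Real.rpow_le_rpow (hQpos x).le hbase hρ0

/-- `Q x ≤ ∑ y, W x y * ε_{s,a,ρ}(x,y)`. -/
lemma Q_le_t (Q : 𝓧 → ℝ) (hQpos : ∀ x, 0 < Q x) (hQle : ∀ x, Q x ≤ 1)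
    (W : 𝓧 → 𝓨 → ℝ) (hWnn : ∀ x y, 0 ≤ W x y) (hWsum : ∀ x, ∑ y : 𝓨, W x y = 1)
    (q : 𝓧 → 𝓨 → ℝ) (hq : ∀ x y, 0 < q x y) (s : ℝ) (a : 𝓧 → ℝ)
    {ρ : ℝ} (hρ0 : 0 ≤ ρ) (hρ1 : ρ ≤ 1) (x : 𝓧) :
    Q x ≤ ∑ y : 𝓨, W x y * epsA Q q s a ρ x y := by
  calc Q x = ∑ y : 𝓨, W x y * Q x := by rw [← Finset.sum_mul, hWsum x, one_mul]
  _ ≤ _ := Finset.sum_le_sum fun y _ =>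
      mul_le_mul_of_nonneg_left (Q_le_epsA Q hQpos hQle q hq s a hρ0 hρ1 x y) (hWnn x y)

end Aux

/-- Jensen's inequality: the i.i.d. Gallager function and exponent are dominated by
their constant-composition counterparts. -/
theorem stmt13 [Nonempty 𝓧] [Nonempty 𝓨]
    (Q : 𝓧 → ℝ) (hQpos : ∀ x, 0 < Q x) (hQle : ∀ x, Q x ≤ 1) (hQsum : ∑ x : 𝓧, Q x = 1)
    (W : 𝓧 → 𝓨 → ℝ) (hWnn : ∀ x y, 0 ≤ W x y) (hWsum : ∀ x, ∑ y : 𝓨, W x y = 1)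
    (q : 𝓧 → 𝓨 → ℝ) (hq : ∀ x y, 0 < q x y) :
    (∀ ρ ∈ Set.Icc (0 : ℝ) 1, ∀ s : ℝ, 0 ≤ s →
      -Real.log (∑ x : 𝓧, ∑ y : 𝓨, Q x * W x y * epsA Q q s (fun _ => 0) ρ x y)
        ≤ -∑ x : 𝓧, Q x * Real.log (∑ y : 𝓨, W x y * epsA Q q s (fun _ => 0) ρ x y)) ∧
    (∀ ρ ∈ Set.Icc (0 : ℝ) 1, E0iid Q q W ρ ≤ E0cc Q q W ρ) ∧
    (∀ R : ℝ, 0 ≤ R → ErIid Q q W R ≤ ErCc Q q W R) := by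
  -- notation
  set B : ℝ := -∑ x : 𝓧, Q x * Real.log (Q x) with hB
  have hB0 : 0 ≤ B := by
    rw [hB, neg_nonneg]
    exact Finset.sum_nonpos fun x _ => mul_nonpos_of_nonneg_of_nonpos (hQpos x).le
      (Real.log_nonpos (hQpos x).le (hQle x))
  -- Part 1 : Jensen
  have part1 : ∀ ρ ∈ Set.Icc (0 : ℝ) 1, ∀ s : ℝ, 0 ≤ s →
      -Real.log (∑ x : 𝓧, ∑ y : 𝓨, Q x * W x y * epsA Q q s (fun _ => 0) ρ x y)
        ≤ -∑ x : 𝓧, Q x * Real.log (∑ y : 𝓨, W x y * epsA Q q s (fun _ => 0) ρ x y) := by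
    intro ρ hρ s _
    obtain ⟨hρ0, hρ1⟩ := hρ
    set t : 𝓧 → ℝ := fun x => ∑ y : 𝓨, W x y * epsA Q q s (fun _ => 0) ρ x y with ht
    have htpos : ∀ x, 0 < t x := fun x =>
      lt_of_lt_of_le (hQpos x) (Q_le_t Q hQpos hQle W hWnn hWsum q hq s _ hρ0 hρ1 x)
    have hrw : (∑ x : 𝓧, ∑ y : 𝓨, Q x * W x y * epsA Q q s (fun _ => 0) ρ x y) =
        ∑ x : 𝓧, Q x * t x := by
      refine Finset.sum_congr rfl fun x _ => ?_
      rw [ht, Finset.mul_sum]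
      exact Finset.sum_congr rfl fun y _ => by ring
    rw [hrw, neg_le_neg_iff]
    have := strictConcaveOn_log_Ioi.concaveOn.le_map_sum (t := Finset.univ) (w := Q) (p := t)
      (fun x _ => (hQpos x).le) hQsum (fun x _ => htpos x)
    simpa [smul_eq_mul] using this
  refine ⟨part1, ?_⟩
  -- boundedness and nonemptiness of the cc sets
  have hccBdd : ∀ ρ ∈ Set.Icc (0 : ℝ) 1, ∀ v ∈ {v | ∃ s : ℝ, 0 ≤ s ∧ ∃ a : 𝓧 → ℝ,
      v = -∑ x : 𝓧, Q x * Real.log (∑ y : 𝓨, W x y * epsA Q q s a ρ x y)}, v ≤ B := by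
    rintro ρ ⟨hρ0, hρ1⟩ v ⟨s, hs, a, rfl⟩
    rw [hB, neg_le_neg_iff]
    refine Finset.sum_le_sum fun x _ => mul_le_mul_of_nonneg_left ?_ (hQpos x).le
    exact Real.log_le_log (hQpos x) (Q_le_t Q hQpos hQle W hWnn hWsum q hq s a hρ0 hρ1 x)
  have hzero_mem : ∀ ρ : ℝ, (0 : ℝ) ∈ {v | ∃ s : ℝ, 0 ≤ s ∧ ∃ a : 𝓧 → ℝ,
      v = -∑ x : 𝓧, Q x * Real.log (∑ y : 𝓨, W x y * epsA Q q s a ρ x y)} := by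
    intro ρ
    refine ⟨0, le_refl 0, fun _ => 0, ?_⟩
    have : ∀ x y, epsA Q q 0 (fun _ => (0:ℝ)) ρ x y = 1 := by
      intro x y
      simp [epsA, hQsum, Real.one_rpow]
    simp [this, hWsum]
  have hE0cc_nonneg : ∀ ρ ∈ Set.Icc (0 : ℝ) 1, 0 ≤ E0cc Q q W ρ := by
    intro ρ hρ
    exact le_csSup ⟨B, fun v hv => hccBdd ρ hρ v hv⟩ (hzero_mem ρ)
  have hE0cc_le_B : ∀ ρ ∈ Set.Icc (0 : ℝ) 1, E0cc Q q W ρ ≤ B := by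
    intro ρ hρ
    exact Real.sSup_le (fun v hv => hccBdd ρ hρ v hv) hB0
  -- Part 2
  have part2 : ∀ ρ ∈ Set.Icc (0 : ℝ) 1, E0iid Q q W ρ ≤ E0cc Q q W ρ := by
    intro ρ hρ
    refine Real.sSup_le ?_ (hE0cc_nonneg ρ hρ)
    rintro v ⟨s, hs, rfl⟩
    refine le_trans (part1 ρ hρ s hs) ?_
    exact le_csSup ⟨B, fun v hv => hccBdd ρ hρ v hv⟩ ⟨s, hs, fun _ => 0, rfl⟩
  refine ⟨part2, ?_⟩
  -- Part 3
  intro R hR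
  unfold ErIid ErCc
  have hErCcBdd : ∀ v ∈ {v | ∃ ρ ∈ Set.Icc (0 : ℝ) 1, v = E0cc Q q W ρ - ρ * R}, v ≤ B := by
    rintro v ⟨ρ, hρ, rfl⟩
    have : 0 ≤ ρ * R := mul_nonneg hρ.1 hR
    linarith [hE0cc_le_B ρ hρ]
  have hErCc_nonneg : 0 ≤ ErCc Q q W R := by
    unfold ErCc
    have h0mem : E0cc Q q W 0 - 0 * R ∈
        {v | ∃ ρ ∈ Set.Icc (0 : ℝ) 1, v = E0cc Q q W ρ - ρ * R} :=
      ⟨0, ⟨le_refl 0, zero_le_one⟩, rfl⟩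
    have := le_csSup ⟨B, hErCcBdd⟩ h0mem
    have h00 : 0 ≤ E0cc Q q W 0 - 0 * R := by
      simpa using hE0cc_nonneg 0 ⟨le_refl 0, zero_le_one⟩
    linarith
  refine Real.sSup_le ?_ hErCc_nonneg
  rintro v ⟨ρ, hρ, rfl⟩
  refine le_trans (by linarith [part2 ρ hρ] : E0iid Q q W ρ - ρ * R ≤ E0cc Q q W ρ - ρ * R) ?_
  exact le_csSup ⟨B, hErCcBdd⟩ ⟨ρ, hρ, rfl⟩
end
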